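/- Let M be a strictly totally ordered monoid (a monoid with a total order such that g < g' implies gh < g'h and hg < hg' for all g, g', h ∈ M), R a ring, and I a two-sided ideal of R. Suppose I is reduced as a (non-unital) ring, i.e., for all a ∈ I, a² = 0 implies a = 0. If the quotient ring R/I is M-central Armendariz, then R is M-central Armendariz. -/

import Mathlib

/-!
Let `αβ = 0` and write `a = α g`, `b = β h`. Reducedness of `I` gives `b x a = 0` for all `x ∈ I`,
by induction on `g * h` over the finitely many products of support elements: `(b x a)²` is
`b x (αβ)(gh) x a = 0` up to the terms `b x α g' · β h' x a` with `g' * h' = g * h`, `g' ≠ g`, and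
strict monotonicity forces `g' * h < g * h` or `g * h' < g * h`, so these vanish by induction.
Now `ab` is central modulo `I`, so `d = ab r - r ab ∈ I`, and `ab d ab = a (b d a) b = 0`;
in a reduced ideal this forces `d = 0`.
-/

def TwoSidedIdeal.IsReduced {R : Type*} [Ring R] (I : TwoSidedIdeal R) : Prop :=
  ∀ a ∈ I, a ^ 2 = 0 → a = 0

def IsCentralArmendariz (M R : Type*) [Monoid M] [Ring R] : Prop :=
  ∀ α β : MonoidAlgebra R M, α * β = 0 →
    ∀ g ∈ α.coeff.support, ∀ h ∈ β.coeff.support, α.coeff g * β.coeff h ∈ Set.center R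

lemma lt_of_mul_eq_mul_of_lt {M : Type*} [Monoid M] [LinearOrder M] [MulLeftStrictMono M]
    [MulRightStrictMono M] {g g' h h' : M} (hg : g < g') (he : g' * h' = g * h) : h' < h := by
  have := mulLeftMono_of_mulLeftStrictMono M
  exact lt_of_not_ge fun hle => (mul_lt_mul_of_lt_of_le hg hle).ne he.symm

namespace TwoSidedIdeal.IsReduced

variable {R : Type*} [Ring R] {I : TwoSidedIdeal R}

lemma eq_zero_of_mul_self (hI : I.IsReduced) {a : R} (ha : a ∈ I) (h : a * a = 0) : a = 0 :=
  hI a ha (by rw [sq, h])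

lemma commute_of_mul_commutator_mul_eq_zero (hI : I.IsReduced) {c r : R}
    (hd : c * r - r * c ∈ I) (h : c * (c * r - r * c) * c = 0) : Commute c r := by
  set d := c * r - r * c with hd_def
  have hcd : c * d = 0 := hI.eq_zero_of_mul_self (I.mul_mem_left _ _ hd) <| by
    rw [← mul_assoc, h, zero_mul]
  have hdc : d * c = 0 := hI.eq_zero_of_mul_self (I.mul_mem_right _ _ hd) <| by
    rw [mul_assoc, ← mul_assoc c, h, mul_zero]
  have hdrc : d * r * c = 0 :=
    hI.eq_zero_of_mul_self (I.mul_mem_right _ _ (I.mul_mem_right _ _ hd)) <| by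
      calc d * r * c * (d * r * c) = d * r * (c * d) * r * c := by noncomm_ring
        _ = 0 := by rw [hcd, mul_zero, zero_mul, zero_mul]
  have hdd : d * d = 0 := by
    calc d * d = d * c * r - d * r * c := by rw [hd_def]; noncomm_ring
      _ = 0 := by rw [hdc, hdrc, zero_mul, sub_zero]
  exact sub_eq_zero.mp (hI.eq_zero_of_mul_self hd hdd)

variable {M : Type*} [Monoid M] [LinearOrder M] [MulLeftStrictMono M] [MulRightStrictMono M]

lemma coeff_mul_mul_coeff_eq_zero_of_forall_lt (hI : I.IsReduced) {α β : MonoidAlgebra R M}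
    (hαβ : α * β = 0) {g h : M}
    (ih : ∀ g' h', g' * h' < g * h → ∀ y ∈ I, β.coeff h' * y * α.coeff g' = 0)
    {x : R} (hx : x ∈ I) : β.coeff h * x * α.coeff g = 0 := by
  classical
  refine hI.eq_zero_of_mul_self (I.mul_mem_right _ _ (I.mul_mem_left _ _ hx)) ?_
  have h0 := congrArg (fun y => β.coeff h * x * y * (x * α.coeff g))
    (MonoidAlgebra.coeff_mul α β (g * h))
  simp only [hαβ, MonoidAlgebra.coeff_zero, Finsupp.coe_zero, Pi.zero_apply, mul_zero, zero_mul,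
    Finsupp.mul_sum, Finsupp.sum_mul, mul_ite, ite_mul] at h0
  rw [Finsupp.sum_eq_single g, Finsupp.sum_eq_single h, if_pos rfl] at h0
  · rw [h0]; noncomm_ring
  · intro h' _ hne
    exact if_neg fun he => hne (mul_right_strictMono.injective he)
  · simp
  · intro g' _ hne
    refine Finset.sum_eq_zero fun h' _ => ?_
    dsimp only
    split_ifs with he
    · rw [show β.coeff h * x * (α.coeff g' * β.coeff h') * (x * α.coeff g)
          = β.coeff h * x * α.coeff g' * (β.coeff h' * x * α.coeff g) by noncomm_ring]
      rcases hne.lt_or_gt with hlt | hlt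
      · rw [ih g' h (mul_left_strictMono hlt) x hx, zero_mul]
      · rw [ih g h' (mul_right_strictMono (lt_of_mul_eq_mul_of_lt hlt he)) x hx, mul_zero]
    · rfl
  · simp

lemma coeff_mul_mul_coeff_eq_zero (hI : I.IsReduced) {α β : MonoidAlgebra R M}
    (hαβ : α * β = 0) (g h : M) {x : R} (hx : x ∈ I) : β.coeff h * x * α.coeff g = 0 := by
  classical
  by_contra hne
  set bad := (α.coeff.support ×ˢ β.coeff.support).filter
    fun p : M × M => ∃ y ∈ I, β.coeff p.2 * y * α.coeff p.1 ≠ 0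
  have mem_bad : ∀ {g h y}, y ∈ I → β.coeff h * y * α.coeff g ≠ 0 → (g, h) ∈ bad := by
    intro g h y hy hne
    simp only [bad, Finset.mem_filter, Finset.mem_product, Finsupp.mem_support_iff]
    exact ⟨⟨fun h0 => hne (by rw [h0, mul_zero]), fun h0 => hne (by rw [h0, zero_mul, zero_mul])⟩,
      y, hy, hne⟩
  obtain ⟨⟨g₀, h₀⟩, hmem, hmin⟩ := bad.exists_min_image (fun p => p.1 * p.2) ⟨_, mem_bad hx hne⟩
  obtain ⟨y, hy, hne₀⟩ := (Finset.mem_filter.1 hmem).2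
  refine hne₀ (hI.coeff_mul_mul_coeff_eq_zero_of_forall_lt hαβ (fun g' h' hlt z hz => ?_) hy)
  by_contra hz'
  exact (hmin _ (mem_bad hz hz')).not_gt hlt

end TwoSidedIdeal.IsReduced

namespace IsCentralArmendariz

variable {M R : Type*} [Monoid M] [Ring R]

lemma coeff_mul_coeff_mem_center (hR : IsCentralArmendariz M R) {α β : MonoidAlgebra R M}
    (hαβ : α * β = 0) (g h : M) : α.coeff g * β.coeff h ∈ Set.center R := by
  by_cases hg : α.coeff g = 0
  · rw [hg, zero_mul]; exact Set.zero_mem_center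
  by_cases hh : β.coeff h = 0
  · rw [hh, mul_zero]; exact Set.zero_mem_center
  exact hR α β hαβ g (Finsupp.mem_support_iff.2 hg) h (Finsupp.mem_support_iff.2 hh)

theorem of_quotient [LinearOrder M] [MulLeftStrictMono M] [MulRightStrictMono M]
    {I : TwoSidedIdeal R} (hI : I.IsReduced) (hQ : IsCentralArmendariz M I.ringCon.Quotient) :
    IsCentralArmendariz M R := by
  intro α β hαβ g _ h _
  let π : R →+* I.ringCon.Quotient := I.ringCon.mk'
  set c := α.coeff g * β.coeff h
  have hc : π c ∈ Set.center _ := by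
    simpa only [MonoidAlgebra.coeff_mapRingHom, ← map_mul] using
      hQ.coeff_mul_coeff_mem_center (α := MonoidAlgebra.mapRingHom M π α)
        (β := MonoidAlgebra.mapRingHom M π β) (by rw [← map_mul, hαβ, map_zero]) g h
  refine Semigroup.mem_center_iff.2 fun r => ?_
  have hd : c * r - r * c ∈ I := by
    rw [TwoSidedIdeal.mem_iff, ← RingCon.eq, RingCon.coe_sub, RingCon.coe_zero, sub_eq_zero]
    exact (Semigroup.mem_center_iff.1 hc (π r)).symm
  refine (hI.commute_of_mul_commutator_mul_eq_zero hd ?_).symm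
  calc c * (c * r - r * c) * c
      = α.coeff g * (β.coeff h * (c * r - r * c) * α.coeff g) * β.coeff h := by
        simp only [c]; noncomm_ring
    _ = 0 := by rw [hI.coeff_mul_mul_coeff_eq_zero hαβ g h hd, mul_zero, zero_mul]

end IsCentralArmendariz

/-- Let `M` be a strictly totally ordered monoid and `I` a two-sided ideal of `R` which is
reduced as a non-unital ring. If `R/I` is `M`-central Armendariz, then so is `R`. -/
theorem stmt_7 (M R : Type*) [Monoid M] [LinearOrder M] [Ring R]
    (hstrict₁ : ∀ g g' h : M, g < g' → g * h < g' * h)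
    (hstrict₂ : ∀ g g' h : M, g < g' → h * g < h * g')
    (I : TwoSidedIdeal R)
    (hred : ∀ a : R, a ∈ I → a ^ 2 = 0 → a = 0)
    (hQ : ∀ α β : MonoidAlgebra I.ringCon.Quotient M, α * β = 0 →
      ∀ g ∈ α.coeff.support, ∀ h ∈ β.coeff.support, α.coeff g * β.coeff h ∈ Set.center I.ringCon.Quotient) :
    ∀ α β : MonoidAlgebra R M, α * β = 0 →
      ∀ g ∈ α.coeff.support, ∀ h ∈ β.coeff.support, α.coeff g * β.coeff h ∈ Set.center R := by
  have : MulLeftStrictMono M := ⟨fun h _ _ hlt => hstrict₂ _ _ h hlt⟩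
  have : MulRightStrictMono M := ⟨fun h _ _ hlt => hstrict₁ _ _ h hlt⟩
  exact IsCentralArmendariz.of_quotient hred hQ
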